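/- arXiv:2303.13901 — 2 statements merged into one kernel-verified Lean document; each statement's English description precedes it below -/
import Mathlib

section
/- Let n ≥ 1, κ > 0, x0, x1 ∈ ℝ^n and m0, m1 ≥ 0. Then HK_κ²(m0·δ_{x0}, m1·δ_{x1}) = κ²( m0 + m1 − 2√(m0 m1) Cos(|x0−x1|/κ) ), where Cos(s) = cos(min(|s|, π/2)). Moreover, if m0, m1 > 0 and 0 < |x0−x1| < κπ/2, then the unique minimizer of E_κ(·|m0δ_{x0}, m1δ_{x1}) is π = cos(|x0−x1|/κ)·√(m0 m1)·δ_{(x0,x1)}. -/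
open MeasureTheory ENNReal Filter Topology RealInnerProductSpace
open scoped Classical

noncomputable section

abbrev Eucl (n : ℕ) : Type := EuclideanSpace ℝ (Fin n)

/-- Truncated cosine `Cos`. -/
def truncCos (s : ℝ) : ℝ := Real.cos (min |s| (Real.pi / 2))

/-- The Hellinger–Kantorovich cost function `c_κ`. -/
def cHK {n : ℕ} (κ : ℝ) (x y : Eucl n) : ℝ≥0∞ :=
  if dist x y < κ * Real.pi / 2 then
    ENNReal.ofReal (-2 * κ ^ 2 * Real.log (Real.cos (dist x y / κ)))
  else ⊤

/-- Kullback–Leibler divergence `KL(ρ|μ)`. -/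
def KLdiv {α : Type*} [MeasurableSpace α] (ρ μ : Measure α) : ℝ≥0∞ :=
  if ρ ≪ μ then
    ∫⁻ x, ENNReal.ofReal ((ρ.rnDeriv μ x).toReal * Real.log (ρ.rnDeriv μ x).toReal
      - (ρ.rnDeriv μ x).toReal + 1) ∂μ
  else ⊤

/-- The soft-marginal Hellinger–Kantorovich functional `E_κ(π|μ0,μ1)`. -/
def HKfun {n : ℕ} (κ : ℝ) (π : Measure (Eucl n × Eucl n)) (μ0 μ1 : Measure (Eucl n)) : ℝ≥0∞ :=
  ∫⁻ p, cHK κ p.1 p.2 ∂π + ENNReal.ofReal (κ ^ 2) * KLdiv (π.map Prod.fst) μ0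
    + ENNReal.ofReal (κ ^ 2) * KLdiv (π.map Prod.snd) μ1

/-- The squared Hellinger–Kantorovich distance `HK_κ²(μ0,μ1)`. -/
def HK2 {n : ℕ} (κ : ℝ) (μ0 μ1 : Measure (Eucl n)) : ℝ≥0∞ :=
  ⨅ (π : Measure (Eucl n × Eucl n)) (_ : IsFiniteMeasure π), HKfun κ π μ0 μ1

/-- The squared 2-Wasserstein distance `W2²(μ0,μ1)`. -/
def W2sq {n : ℕ} (μ0 μ1 : Measure (Eucl n)) : ℝ≥0∞ :=
  ⨅ (π : Measure (Eucl n × Eucl n))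
    (_ : π.map Prod.fst = μ0 ∧ π.map Prod.snd = μ1),
      ∫⁻ p, ENNReal.ofReal (dist p.1 p.2 ^ 2) ∂π

/-- Narrow convergence of a sequence of measures. -/
def NarrowTendsto {α : Type*} [MeasurableSpace α] [TopologicalSpace α]
    (ρ : ℕ → Measure α) (ρlim : Measure α) : Prop :=
  ∀ φ : BoundedContinuousFunction α ℝ,
    Tendsto (fun N => ∫ x, φ x ∂(ρ N)) atTop (𝓝 (∫ x, φ x ∂ρlim))

/-- The spherical Hellinger–Kantorovich distance `SHK_κ(μ0,μ1)`. -/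
def SHK {n : ℕ} (κ : ℝ) (μ0 μ1 : Measure (Eucl n)) : ℝ :=
  κ * Real.arccos (1 - (HK2 κ μ0 μ1).toReal / (2 * κ ^ 2))

/-- The square-root measure `√(ρσ)`. -/
def sqrtMeasure {α : Type*} [MeasurableSpace α] (ρ σ : Measure α) : Measure α :=
  (ρ + σ).withDensity (fun x => (ρ.rnDeriv (ρ + σ) x * σ.rnDeriv (ρ + σ) x) ^ (1/2 : ℝ))



/-- barycentric HK velocity. -/
def barV {n : ℕ} (κ : ℝ) (μ0 : Measure (Eucl n)) (π : Measure (Eucl n × Eucl n))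
    [IsFiniteMeasure π] (x : Eucl n) : Eucl n :=
  (κ * ((π.map Prod.fst).rnDeriv μ0 x).toReal) •
    ∫ y, (Real.tan (‖y - x‖ / κ) / ‖y - x‖) • (y - x) ∂(π.condKernel x)

/-- barycentric HK growth. -/
def barA {n : ℕ} (μ0 : Measure (Eucl n)) (π : Measure (Eucl n × Eucl n)) (x : Eucl n) : ℝ :=
  2 * (((π.map Prod.fst).rnDeriv μ0 x).toReal - 1)

/-- barycentric W2 velocity. -/
def barW {n : ℕ} (π : Measure (Eucl n × Eucl n)) [IsFiniteMeasure π] (x : Eucl n) : Eucl n :=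
  ∫ y, (y - x) ∂(π.condKernel x)

end

/-!
A plan of finite energy has marginals absolutely continuous with respect to the two Diracs, so it
is `m • δ_(x0, x1)` for some `m ≥ 0`. Its energy is `m c_κ(x0, x1) + κ² (m0 F(m/m0) + m1 F(m/m1))`
with `F = klFun`. If the cost is finite, this equals `2κ² s F(m/s) + κ² (m0 + m1 - 2s)` with
`s = cos(|x0 - x1|/κ) √(m0 m1)`, so `m = s` is the unique minimiser because `F` vanishes only at
`1`. If `m0 m1 = 0` or the cost is infinite, every `m > 0` has infinite energy and the zero plan
is optimal.
-/

open InformationTheory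

section KullbackLeibler

variable {α : Type*} [MeasurableSpace α]

lemma KLdiv_zero_left (μ : Measure α) : KLdiv 0 μ = μ Set.univ := by
  rw [KLdiv, if_pos (Measure.AbsolutelyContinuous.zero μ)]
  have h : (fun x => ENNReal.ofReal (((0 : Measure α).rnDeriv μ x).toReal
      * Real.log ((0 : Measure α).rnDeriv μ x).toReal - ((0 : Measure α).rnDeriv μ x).toReal + 1))
      =ᵐ[μ] fun _ => 1 := by
    filter_upwards [Measure.rnDeriv_zero μ] with x hx
    simp [hx]
  rw [lintegral_congr_ae h, lintegral_one]

lemma KLdiv_smul_self (μ : Measure α) [IsFiniteMeasure μ] {t : ℝ≥0∞} (ht : t ≠ ⊤) :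
    KLdiv (t • μ) μ = ENNReal.ofReal (klFun t.toReal) * μ Set.univ := by
  rw [KLdiv, if_pos Measure.smul_absolutelyContinuous]
  have h : (fun x => ENNReal.ofReal (((t • μ).rnDeriv μ x).toReal
      * Real.log ((t • μ).rnDeriv μ x).toReal - ((t • μ).rnDeriv μ x).toReal + 1))
      =ᵐ[μ] fun _ => ENNReal.ofReal (klFun t.toReal) := by
    filter_upwards [Measure.rnDeriv_smul_left_of_ne_top μ μ ht, Measure.rnDeriv_self μ]
      with x hsmul hself
    simp only [hsmul, Pi.smul_apply, hself, smul_eq_mul, mul_one, klFun]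
    ring_nf
  rw [lintegral_congr_ae h, lintegral_const]

lemma KLdiv_ofReal_smul (μ : Measure α) [IsFiniteMeasure μ] {a c : ℝ} (ha : 0 ≤ a)
    (hc : 0 < c) :
    KLdiv (ENNReal.ofReal a • μ) (ENNReal.ofReal c • μ)
      = ENNReal.ofReal (c * klFun (a / c)) * μ Set.univ := by
  have hfin : IsFiniteMeasure (ENNReal.ofReal c • μ) := ⟨by simp [ENNReal.mul_lt_top]⟩
  have hsmul : ENNReal.ofReal a • μ = ENNReal.ofReal (a / c) • ENNReal.ofReal c • μ := by
    rw [smul_smul, ← ENNReal.ofReal_mul (by positivity), div_mul_cancel₀ a hc.ne']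
  rw [hsmul, KLdiv_smul_self _ ENNReal.ofReal_ne_top, Measure.smul_apply, smul_eq_mul,
    ENNReal.toReal_ofReal (by positivity), ← mul_assoc, ← ENNReal.ofReal_mul
      (klFun_nonneg (by positivity)), mul_comm (klFun _)]

end KullbackLeibler

lemma eq_measure_singleton_smul_dirac_of_map_ac {α β : Type*} [MeasurableSpace α]
    [MeasurableSpace β] [MeasurableSingletonClass α] [MeasurableSingletonClass β]
    {ν : Measure (α × β)} {x : α} {y : β}
    (hfst : ν.map Prod.fst ≪ Measure.dirac x) (hsnd : ν.map Prod.snd ≪ Measure.dirac y) :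
    ν = ν {(x, y)} • Measure.dirac (x, y) := by
  have hx : ∀ᵐ x' ∂ν.map Prod.fst, x' = x := hfst.ae_le (by simp [ae_dirac_eq])
  have hy : ∀ᵐ y' ∂ν.map Prod.snd, y' = y := hsnd.ae_le (by simp [ae_dirac_eq])
  have hxy : ∀ᵐ p ∂ν, p ∈ ({(x, y)} : Set (α × β)) := by
    filter_upwards [ae_of_ae_map measurable_fst.aemeasurable hx,
      ae_of_ae_map measurable_snd.aemeasurable hy] with p h1 h2
    exact Prod.ext h1 h2
  rw [← Measure.restrict_singleton, Measure.restrict_eq_self_of_ae_mem hxy]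

lemma truncCos_of_abs_le {s : ℝ} (hs : |s| ≤ Real.pi / 2) : truncCos s = Real.cos s := by
  rw [truncCos, min_eq_left hs, Real.cos_abs]

lemma truncCos_of_le_abs {s : ℝ} (hs : Real.pi / 2 ≤ |s|) : truncCos s = 0 := by
  rw [truncCos, min_eq_right hs, Real.cos_pi_div_two]

lemma mul_klFun_div_add_mul_klFun_div {m m0 m1 γ : ℝ} (hm0 : 0 < m0) (hm1 : 0 < m1)
    (hγ : 0 < γ) :
    m0 * klFun (m / m0) + m1 * klFun (m / m1) - 2 * m * Real.log γ
      = 2 * (γ * √(m0 * m1)) * klFun (m / (γ * √(m0 * m1)))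
        + (m0 + m1 - 2 * (γ * √(m0 * m1))) := by
  have hs : 0 < γ * √(m0 * m1) := by positivity
  rcases eq_or_ne m 0 with rfl | hm
  · simp [klFun]
  simp only [klFun]
  field_simp
  rw [Real.log_div hm hm0.ne', Real.log_div hm hm1.ne', Real.log_div hm hs.ne',
    Real.log_mul hγ.ne' (by positivity), Real.log_sqrt (by positivity),
    Real.log_mul hm0.ne' hm1.ne']
  ring

lemma two_mul_sqrt_mul_le_add {a b : ℝ} (ha : 0 ≤ a) (hb : 0 ≤ b) : 2 * √(a * b) ≤ a + b := by
  rw [Real.sqrt_mul ha]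
  nlinarith [Real.sq_sqrt ha, Real.sq_sqrt hb, sq_nonneg (√a - √b)]

lemma cos_div_pos_of_lt_mul_pi_div_two {κ d : ℝ} (hκ : 0 < κ) (hd0 : 0 ≤ d)
    (hd : d < κ * Real.pi / 2) : 0 < Real.cos (d / κ) := by
  apply Real.cos_pos_of_mem_Ioo
  constructor
  · linarith [Real.pi_pos, div_nonneg hd0 hκ.le]
  · rw [div_lt_iff₀ hκ]
    linarith

section HellingerKantorovich

variable {n : ℕ} {κ : ℝ}

lemma HKfun_zero (κ : ℝ) (μ0 μ1 : Measure (Eucl n)) :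
    HKfun κ 0 μ0 μ1 = ENNReal.ofReal (κ ^ 2) * (μ0 Set.univ + μ1 Set.univ) := by
  simp [HKfun, KLdiv_zero_left, mul_add]

lemma map_ac_of_HKfun_ne_top (hκ : κ ≠ 0) {π : Measure (Eucl n × Eucl n)}
    {μ0 μ1 : Measure (Eucl n)} (h : HKfun κ π μ0 μ1 ≠ ⊤) :
    π.map Prod.fst ≪ μ0 ∧ π.map Prod.snd ≪ μ1 := by
  have hκ2 : ENNReal.ofReal (κ ^ 2) ≠ 0 := by simp [hκ]
  constructor <;> by_contra hac <;> exact h (by simp [HKfun, KLdiv, hac, hκ2])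

lemma exists_eq_ofReal_smul_dirac_of_HKfun_ne_top (hκ : κ ≠ 0)
    {π : Measure (Eucl n × Eucl n)} [IsFiniteMeasure π] {x0 x1 : Eucl n} {a b : ℝ≥0∞}
    (h : HKfun κ π (a • Measure.dirac x0) (b • Measure.dirac x1) ≠ ⊤) :
    ∃ m : ℝ, 0 ≤ m ∧ π = ENNReal.ofReal m • Measure.dirac (x0, x1) := by
  obtain ⟨hfst, hsnd⟩ := map_ac_of_HKfun_ne_top hκ h
  refine ⟨(π {(x0, x1)}).toReal, ENNReal.toReal_nonneg, ?_⟩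
  rw [ENNReal.ofReal_toReal (measure_ne_top π _)]
  exact eq_measure_singleton_smul_dirac_of_map_ac
    (hfst.trans Measure.smul_absolutelyContinuous) (hsnd.trans Measure.smul_absolutelyContinuous)

lemma HKfun_ofReal_smul_dirac {m m0 m1 : ℝ} (hm : 0 ≤ m) (hm0 : 0 < m0) (hm1 : 0 < m1)
    (x0 x1 : Eucl n) :
    HKfun κ (ENNReal.ofReal m • Measure.dirac (x0, x1))
        (ENNReal.ofReal m0 • Measure.dirac x0) (ENNReal.ofReal m1 • Measure.dirac x1)
      = ENNReal.ofReal m * cHK κ x0 x1 + ENNReal.ofReal (κ ^ 2 * (m0 * klFun (m / m0)))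
        + ENNReal.ofReal (κ ^ 2 * (m1 * klFun (m / m1))) := by
  rw [HKfun, Measure.map_smul, Measure.map_dirac' measurable_fst, Measure.map_smul,
    Measure.map_dirac' measurable_snd, lintegral_smul_measure, lintegral_dirac, smul_eq_mul,
    KLdiv_ofReal_smul _ hm hm0, KLdiv_ofReal_smul _ hm hm1]
  simp only [measure_univ, mul_one, ← ENNReal.ofReal_mul (sq_nonneg κ)]

end HellingerKantorovich

section Interior

variable {n : ℕ} {κ m0 m1 : ℝ} {x0 x1 : Eucl n}

lemma HKfun_ofReal_smul_dirac_of_lt (hκ : 0 < κ) (hm0 : 0 < m0) (hm1 : 0 < m1)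
    (hd : dist x0 x1 < κ * Real.pi / 2) {m : ℝ} (hm : 0 ≤ m) :
    HKfun κ (ENNReal.ofReal m • Measure.dirac (x0, x1))
        (ENNReal.ofReal m0 • Measure.dirac x0) (ENNReal.ofReal m1 • Measure.dirac x1)
      = ENNReal.ofReal (κ ^ 2 *
          (2 * (Real.cos (dist x0 x1 / κ) * √(m0 * m1))
              * klFun (m / (Real.cos (dist x0 x1 / κ) * √(m0 * m1)))
            + (m0 + m1 - 2 * (Real.cos (dist x0 x1 / κ) * √(m0 * m1))))) := by
  have hγ := cos_div_pos_of_lt_mul_pi_div_two hκ dist_nonneg hd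
  have hcost : 0 ≤ -2 * κ ^ 2 * Real.log (Real.cos (dist x0 x1 / κ)) := by
    nlinarith [Real.log_nonpos hγ.le (Real.cos_le_one _), sq_nonneg κ]
  have hkl : ∀ c, 0 < c → 0 ≤ κ ^ 2 * (c * klFun (m / c)) := fun c hc =>
    mul_nonneg (sq_nonneg κ) (mul_nonneg hc.le (klFun_nonneg (by positivity)))
  rw [HKfun_ofReal_smul_dirac hm hm0 hm1, cHK, if_pos hd, ← ENNReal.ofReal_mul hm,
    ← ENNReal.ofReal_add (mul_nonneg hm hcost) (hkl m0 hm0),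
    ← ENNReal.ofReal_add (by linarith [mul_nonneg hm hcost, hkl m0 hm0]) (hkl m1 hm1)]
  congr 1
  linear_combination κ ^ 2 * mul_klFun_div_add_mul_klFun_div (m := m) hm0 hm1 hγ

lemma HKfun_diracs_ge_and_eq_iff_of_lt (hκ : 0 < κ) (hm0 : 0 < m0) (hm1 : 0 < m1)
    (hd : dist x0 x1 < κ * Real.pi / 2) (π : Measure (Eucl n × Eucl n)) [IsFiniteMeasure π] :
    ENNReal.ofReal (κ ^ 2 * (m0 + m1 - 2 * (Real.cos (dist x0 x1 / κ) * √(m0 * m1))))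
        ≤ HKfun κ π (ENNReal.ofReal m0 • Measure.dirac x0)
          (ENNReal.ofReal m1 • Measure.dirac x1) ∧
      (HKfun κ π (ENNReal.ofReal m0 • Measure.dirac x0) (ENNReal.ofReal m1 • Measure.dirac x1)
          = ENNReal.ofReal (κ ^ 2 * (m0 + m1 - 2 * (Real.cos (dist x0 x1 / κ) * √(m0 * m1))))
        ↔ π = ENNReal.ofReal (Real.cos (dist x0 x1 / κ) * √(m0 * m1))
          • Measure.dirac (x0, x1)) := by
  set s := Real.cos (dist x0 x1 / κ) * √(m0 * m1)
  have hs : 0 < s := mul_pos (cos_div_pos_of_lt_mul_pi_div_two hκ dist_nonneg hd) (by positivity)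
  have hT : 0 ≤ κ ^ 2 * (m0 + m1 - 2 * s) := by
    have hsle : s ≤ √(m0 * m1) := mul_le_of_le_one_left (Real.sqrt_nonneg _) (Real.cos_le_one _)
    nlinarith [two_mul_sqrt_mul_le_add hm0.le hm1.le, sq_nonneg κ]
  have hgap : ∀ m, 0 ≤ m → 0 ≤ κ ^ 2 * (2 * s * klFun (m / s)) := fun m hm =>
    mul_nonneg (sq_nonneg κ) (mul_nonneg (by positivity) (klFun_nonneg (by positivity)))
  have hformula := fun m (hm : 0 ≤ m) => HKfun_ofReal_smul_dirac_of_lt hκ hm0 hm1 hd hm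
  have hmin : ∀ m, 0 ≤ m → (HKfun κ (ENNReal.ofReal m • Measure.dirac (x0, x1))
      (ENNReal.ofReal m0 • Measure.dirac x0) (ENNReal.ofReal m1 • Measure.dirac x1)
        = ENNReal.ofReal (κ ^ 2 * (m0 + m1 - 2 * s)) ↔ m = s) := fun m hm => by
    rw [hformula m hm, ENNReal.ofReal_eq_ofReal_iff (by linarith [hgap m hm]) hT, mul_add,
      add_eq_right, mul_eq_zero, mul_eq_zero, klFun_eq_zero_iff (by positivity),
      div_eq_one_iff_eq hs.ne', or_iff_right (pow_ne_zero 2 hκ.ne'),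
      or_iff_right (by positivity)]
  refine ⟨?_, ⟨fun h => ?_, fun h => ?_⟩⟩
  · by_cases htop : HKfun κ π (ENNReal.ofReal m0 • Measure.dirac x0)
      (ENNReal.ofReal m1 • Measure.dirac x1) = ⊤
    · exact htop ▸ le_top
    obtain ⟨m, hm, rfl⟩ := exists_eq_ofReal_smul_dirac_of_HKfun_ne_top hκ.ne' htop
    rw [hformula m hm]
    exact ENNReal.ofReal_le_ofReal (by linarith [hgap m hm])
  · obtain ⟨m, hm, rfl⟩ :=
      exists_eq_ofReal_smul_dirac_of_HKfun_ne_top hκ.ne' (h ▸ ENNReal.ofReal_ne_top)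
    rw [(hmin m hm).1 h]
  · subst h
    exact (hmin s hs.le).2 rfl

lemma HK2_diracs_of_lt (hκ : 0 < κ) (hm0 : 0 < m0) (hm1 : 0 < m1)
    (hd : dist x0 x1 < κ * Real.pi / 2) :
    HK2 κ (ENNReal.ofReal m0 • Measure.dirac x0) (ENNReal.ofReal m1 • Measure.dirac x1)
      = ENNReal.ofReal (κ ^ 2 * (m0 + m1 - 2 * (Real.cos (dist x0 x1 / κ) * √(m0 * m1)))) := by
  have hfin : IsFiniteMeasure (ENNReal.ofReal (Real.cos (dist x0 x1 / κ) * √(m0 * m1))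
      • Measure.dirac (x0, x1)) := ⟨by simp⟩
  refine le_antisymm (iInf₂_le_of_le _ hfin ?_) (le_iInf₂ fun π _ => ?_)
  · exact ((HKfun_diracs_ge_and_eq_iff_of_lt hκ hm0 hm1 hd _).2.2 rfl).le
  · exact (HKfun_diracs_ge_and_eq_iff_of_lt hκ hm0 hm1 hd π).1

end Interior

section Degenerate

variable {n : ℕ} {κ m0 m1 : ℝ} {x0 x1 : Eucl n}

lemma HKfun_ofReal_smul_dirac_eq_top (hκ : κ ≠ 0) {m : ℝ} (hm : 0 < m)
    (hdeg : m0 = 0 ∨ m1 = 0 ∨ κ * Real.pi / 2 ≤ dist x0 x1) :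
    HKfun κ (ENNReal.ofReal m • Measure.dirac (x0, x1))
      (ENNReal.ofReal m0 • Measure.dirac x0) (ENNReal.ofReal m1 • Measure.dirac x1) = ⊤ := by
  by_contra hne
  obtain ⟨hfst, hsnd⟩ := map_ac_of_HKfun_ne_top hκ hne
  rw [Measure.map_smul, Measure.map_dirac' measurable_fst] at hfst
  rw [Measure.map_smul, Measure.map_dirac' measurable_snd] at hsnd
  have hpos : ENNReal.ofReal m ≠ 0 := by simpa using hm
  rcases hdeg with rfl | rfl | hd
  · simpa [hpos] using hfst (s := Set.univ) (by simp)
  · simpa [hpos] using hsnd (s := Set.univ) (by simp)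
  · have hcost : ∫⁻ p, cHK κ p.1 p.2 ∂(ENNReal.ofReal m • Measure.dirac (x0, x1)) = ⊤ := by
      rw [lintegral_smul_measure, lintegral_dirac]
      simp [cHK, not_lt.mpr hd, hpos]
    exact hne (by rw [HKfun, hcost, top_add, top_add])

lemma HK2_diracs_of_degenerate (hκ : κ ≠ 0) (hm0 : 0 ≤ m0) (hm1 : 0 ≤ m1)
    (hdeg : m0 = 0 ∨ m1 = 0 ∨ κ * Real.pi / 2 ≤ dist x0 x1) :
    HK2 κ (ENNReal.ofReal m0 • Measure.dirac x0) (ENNReal.ofReal m1 • Measure.dirac x1)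
      = ENNReal.ofReal (κ ^ 2 * (m0 + m1)) := by
  have hzero : HKfun κ 0 (ENNReal.ofReal m0 • Measure.dirac x0)
      (ENNReal.ofReal m1 • Measure.dirac x1) = ENNReal.ofReal (κ ^ 2 * (m0 + m1)) := by
    simp [HKfun_zero, ENNReal.ofReal_mul (sq_nonneg κ), ENNReal.ofReal_add hm0 hm1]
  refine le_antisymm (iInf₂_le_of_le 0 inferInstance hzero.le) (le_iInf₂ fun π _ => ?_)
  by_cases htop : HKfun κ π (ENNReal.ofReal m0 • Measure.dirac x0)
    (ENNReal.ofReal m1 • Measure.dirac x1) = ⊤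
  · exact htop ▸ le_top
  obtain ⟨m, hm, rfl⟩ := exists_eq_ofReal_smul_dirac_of_HKfun_ne_top hκ htop
  rcases hm.eq_or_lt with rfl | hm
  · simp [hzero]
  · exact absurd (HKfun_ofReal_smul_dirac_eq_top hκ hm hdeg) htop

end Degenerate

theorem hk_between_diracs_general
    {n : ℕ} (κ : ℝ) (hκ : 0 < κ)
    (x0 x1 : Eucl n) (m0 m1 : ℝ) (hm0 : 0 ≤ m0) (hm1 : 0 ≤ m1) :
    HK2 κ (ENNReal.ofReal m0 • Measure.dirac x0) (ENNReal.ofReal m1 • Measure.dirac x1)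
      = ENNReal.ofReal (κ ^ 2 *
          (m0 + m1 - 2 * Real.sqrt (m0 * m1) * truncCos (dist x0 x1 / κ))) ∧
    (0 < m0 → 0 < m1 → 0 < dist x0 x1 → dist x0 x1 < κ * Real.pi / 2 →
      ∀ π : Measure (Eucl n × Eucl n), IsFiniteMeasure π →
        (HKfun κ π (ENNReal.ofReal m0 • Measure.dirac x0)
            (ENNReal.ofReal m1 • Measure.dirac x1)
          = HK2 κ (ENNReal.ofReal m0 • Measure.dirac x0)
              (ENNReal.ofReal m1 • Measure.dirac x1)
        ↔ π = ENNReal.ofReal (Real.cos (dist x0 x1 / κ) * Real.sqrt (m0 * m1))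
            • Measure.dirac (x0, x1))) := by
  have habs : |dist x0 x1 / κ| = dist x0 x1 / κ := abs_of_nonneg (by positivity)
  refine ⟨?_, fun h0 h1 _ hd π _ => ?_⟩
  · by_cases hint : 0 < m0 ∧ 0 < m1 ∧ dist x0 x1 < κ * Real.pi / 2
    · obtain ⟨h0, h1, hd⟩ := hint
      have hcos : truncCos (dist x0 x1 / κ) = Real.cos (dist x0 x1 / κ) :=
        truncCos_of_abs_le (by rw [habs, div_le_iff₀ hκ]; linarith)
      rw [HK2_diracs_of_lt hκ h0 h1 hd, hcos]
      ring_nf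
    have hdeg : m0 = 0 ∨ m1 = 0 ∨ κ * Real.pi / 2 ≤ dist x0 x1 := by
      rcases hm0.eq_or_lt with h0 | h0
      · exact Or.inl h0.symm
      rcases hm1.eq_or_lt with h1 | h1
      · exact Or.inr (Or.inl h1.symm)
      exact Or.inr (Or.inr (not_lt.mp fun hd => hint ⟨h0, h1, hd⟩))
    have hvanish : √(m0 * m1) * truncCos (dist x0 x1 / κ) = 0 := by
      rcases hdeg with rfl | rfl | hd
      · simp
      · simp
      · rw [truncCos_of_le_abs (by rw [habs, le_div_iff₀ hκ]; linarith), mul_zero]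
    rw [HK2_diracs_of_degenerate hκ.ne' hm0 hm1 hdeg, mul_assoc 2, hvanish, mul_zero, sub_zero]
  · rw [HK2_diracs_of_lt hκ h0 h1 hd]
    exact (HKfun_diracs_ge_and_eq_iff_of_lt hκ h0 h1 hd π).2

/-- the HK distance between two Dirac measures, and the unique optimal plan. -/
theorem hk_between_diracs
    {n : ℕ} (hn : 1 ≤ n) (κ : ℝ) (hκ : 0 < κ)
    (x0 x1 : Eucl n) (m0 m1 : ℝ) (hm0 : 0 ≤ m0) (hm1 : 0 ≤ m1) :
    HK2 κ (ENNReal.ofReal m0 • Measure.dirac x0) (ENNReal.ofReal m1 • Measure.dirac x1)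
      = ENNReal.ofReal (κ ^ 2 *
          (m0 + m1 - 2 * Real.sqrt (m0 * m1) * truncCos (dist x0 x1 / κ))) ∧
    (0 < m0 → 0 < m1 → 0 < dist x0 x1 → dist x0 x1 < κ * Real.pi / 2 →
      ∀ π : Measure (Eucl n × Eucl n), IsFiniteMeasure π →
        (HKfun κ π (ENNReal.ofReal m0 • Measure.dirac x0)
            (ENNReal.ofReal m1 • Measure.dirac x1)
          = HK2 κ (ENNReal.ofReal m0 • Measure.dirac x0)
              (ENNReal.ofReal m1 • Measure.dirac x1)
        ↔ π = ENNReal.ofReal (Real.cos (dist x0 x1 / κ) * Real.sqrt (m0 * m1))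
            • Measure.dirac (x0, x1))) :=
  hk_between_diracs_general κ hκ x0 x1 m0 m1 hm0 hm1
end

section
/- Let n ≥ 1, κ > 0 and x0, x1 ∈ ℝ^n with |x0−x1| < κπ/2. Then the spherical Hellinger–Kantorovich distance between the Dirac measures δ_{x0} and δ_{x1} equals the Euclidean distance: SHK_κ(δ_{x0}, δ_{x1}) = |x0 − x1|. -/
open MeasureTheory ENNReal Filter Topology RealInnerProductSpace
open scoped Classical

/-! A plan `π` has finite energy only if both marginals are absolutely continuous with respect
to the Diracs, which forces `π = M • δ_(x0,x1)`. With `θ = |x0 - x1| / κ` its energy is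
`-2κ² M log (cos θ) + 2κ² klFun M`, which by `log u ≤ u - 1` is minimal at `M = cos θ`, with
value `2κ² (1 - cos θ)`. Hence `1 - HK²/(2κ²) = cos θ` and `SHK = κ θ`. -/

open InformationTheory

theorem InformationTheory.one_sub_le_neg_mul_log_add_klFun {m M : ℝ} (hm : 0 < m) (hM : 0 ≤ M) :
    1 - m ≤ -M * Real.log m + klFun M := by
  rcases hM.eq_or_lt with rfl | hM
  · rw [klFun_zero]
    linarith
  · have hlog : Real.log (m / M) ≤ m / M - 1 := Real.log_le_sub_one_of_pos (by positivity)
    rw [Real.log_div hm.ne' hM.ne'] at hlog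
    have : M * (Real.log m - Real.log M) ≤ m - M := by
      calc M * (Real.log m - Real.log M) ≤ M * (m / M - 1) := by gcongr
        _ = m - M := by field_simp
    rw [klFun_apply]
    linarith

theorem MeasureTheory.Measure.eq_smul_dirac_of_absolutelyContinuous_map
    {α β : Type*} [MeasurableSpace α] [MeasurableSpace β]
    [MeasurableSingletonClass α] [MeasurableSingletonClass β]
    {π : Measure (α × β)} {a : α} {b : β}
    (ha : π.map Prod.fst ≪ Measure.dirac a) (hb : π.map Prod.snd ≪ Measure.dirac b) :
    π = π {(a, b)} • Measure.dirac (a, b) := by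
  have hfst : ∀ᵐ p ∂π, p.1 = a :=
    ae_of_ae_map measurable_fst.aemeasurable (ha.ae_le (by simp : ∀ᵐ x ∂Measure.dirac a, x = a))
  have hsnd : ∀ᵐ p ∂π, p.2 = b :=
    ae_of_ae_map measurable_snd.aemeasurable (hb.ae_le (by simp : ∀ᵐ y ∂Measure.dirac b, y = b))
  have hmem : ∀ᵐ p ∂π, p ∈ ({(a, b)} : Set (α × β)) := by
    filter_upwards [hfst, hsnd] with p h1 h2
    exact Prod.ext h1 h2
  rw [← Measure.restrict_singleton, Measure.restrict_eq_self_of_ae_mem hmem]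

theorem absolutelyContinuous_of_KLdiv_ne_top {α : Type*} [MeasurableSpace α]
    {ρ μ : Measure α} (h : KLdiv ρ μ ≠ ⊤) : ρ ≪ μ := by
  by_contra hac
  exact h (if_neg hac)

theorem KLdiv_smul_dirac {α : Type*} [MeasurableSpace α] [MeasurableSingletonClass α]
    (x : α) {M : ℝ≥0∞} (hM : M ≠ ⊤) :
    KLdiv (M • Measure.dirac x) (Measure.dirac x) = ENNReal.ofReal (klFun M.toReal) := by
  rw [KLdiv, if_pos Measure.smul_absolutelyContinuous, lintegral_dirac]
  have hrn : (M • Measure.dirac x).rnDeriv (Measure.dirac x) x = M := by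
    have hsmul := Measure.rnDeriv_smul_left_of_ne_top (Measure.dirac x) (Measure.dirac x) hM
    have hself := Measure.rnDeriv_self (Measure.dirac x)
    rw [Filter.EventuallyEq, ae_dirac_eq, eventually_pure] at hsmul hself
    rw [hsmul, Pi.smul_apply, hself, smul_eq_mul, mul_one]
  rw [hrn, klFun_apply]
  ring_nf

section Metric

variable {X : Type*} [PseudoMetricSpace X] {x y : X} {κ : ℝ}

theorem pos_of_dist_lt_mul_pi_div_two (hd : dist x y < κ * Real.pi / 2) : 0 < κ := by
  have : 0 < κ * Real.pi := by linarith [dist_nonneg (x := x) (y := y)]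
  exact pos_of_mul_pos_left this Real.pi_pos.le

theorem cos_dist_div_pos (hd : dist x y < κ * Real.pi / 2) : 0 < Real.cos (dist x y / κ) := by
  have hκ := pos_of_dist_lt_mul_pi_div_two hd
  apply Real.cos_pos_of_mem_Ioo ⟨?_, ?_⟩
  · linarith [Real.pi_pos, div_nonneg (dist_nonneg (x := x) (y := y)) hκ.le]
  · rw [div_lt_iff₀ hκ]
    linarith

end Metric

variable {n : ℕ} {κ : ℝ} {x0 x1 : Eucl n}

theorem HKfun_smul_dirac (hd : dist x0 x1 < κ * Real.pi / 2) {M : ℝ≥0∞} (hM : M ≠ ⊤) :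
    HKfun κ (M • Measure.dirac (x0, x1)) (Measure.dirac x0) (Measure.dirac x1)
      = ENNReal.ofReal (M.toReal * (-2 * κ ^ 2 * Real.log (Real.cos (dist x0 x1 / κ)))
          + 2 * κ ^ 2 * klFun M.toReal) := by
  have hlog : Real.log (Real.cos (dist x0 x1 / κ)) ≤ 0 :=
    Real.log_nonpos (cos_dist_div_pos hd).le (Real.cos_le_one _)
  have hcost : 0 ≤ M.toReal * (-2 * κ ^ 2 * Real.log (Real.cos (dist x0 x1 / κ))) :=
    mul_nonneg ENNReal.toReal_nonneg (by nlinarith [sq_nonneg κ])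
  have hkl : 0 ≤ κ ^ 2 * klFun M.toReal :=
    mul_nonneg (sq_nonneg κ) (klFun_nonneg ENNReal.toReal_nonneg)
  simp only [HKfun, Measure.map_smul, Measure.map_dirac' measurable_fst,
    Measure.map_dirac' measurable_snd, KLdiv_smul_dirac _ hM, lintegral_smul_measure,
    lintegral_dirac, cHK, if_pos hd]
  rw [← ENNReal.ofReal_toReal hM, smul_eq_mul, ← ENNReal.ofReal_mul ENNReal.toReal_nonneg,
    ← ENNReal.ofReal_mul (sq_nonneg κ), ENNReal.toReal_ofReal ENNReal.toReal_nonneg,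
    ← ENNReal.ofReal_add hcost hkl, ← ENNReal.ofReal_add (add_nonneg hcost hkl) hkl]
  ring_nf

theorem HK2_dirac_dirac (hd : dist x0 x1 < κ * Real.pi / 2) :
    HK2 κ (Measure.dirac x0) (Measure.dirac x1)
      = ENNReal.ofReal (2 * κ ^ 2 * (1 - Real.cos (dist x0 x1 / κ))) := by
  have hκ := pos_of_dist_lt_mul_pi_div_two hd
  have hm := cos_dist_div_pos hd
  apply le_antisymm
  · have : IsFiniteMeasure (ENNReal.ofReal (Real.cos (dist x0 x1 / κ)) • Measure.dirac (x0, x1)) :=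
      Measure.smul_finite _ ENNReal.ofReal_ne_top
    refine (iInf₂_le _ this).trans_eq ?_
    rw [HKfun_smul_dirac hd ENNReal.ofReal_ne_top, ENNReal.toReal_ofReal hm.le, klFun_apply]
    ring_nf
  · refine le_iInf₂ fun π _ => ?_
    by_cases hfin : HKfun κ π (Measure.dirac x0) (Measure.dirac x1) = ⊤
    · exact hfin ▸ le_top
    have hκ2 : ENNReal.ofReal (κ ^ 2) ≠ 0 := by positivity
    have h0 : KLdiv (π.map Prod.fst) (Measure.dirac x0) ≠ ⊤ := fun h => hfin <| by
      rw [HKfun, h, ENNReal.mul_top hκ2, add_top, top_add]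
    have h1 : KLdiv (π.map Prod.snd) (Measure.dirac x1) ≠ ⊤ := fun h => hfin <| by
      rw [HKfun, h, ENNReal.mul_top hκ2, add_top]
    rw [Measure.eq_smul_dirac_of_absolutelyContinuous_map
      (absolutelyContinuous_of_KLdiv_ne_top h0) (absolutelyContinuous_of_KLdiv_ne_top h1),
      HKfun_smul_dirac hd (measure_ne_top π _)]
    apply ENNReal.ofReal_le_ofReal
    have := one_sub_le_neg_mul_log_add_klFun hm (ENNReal.toReal_nonneg (a := π {(x0, x1)}))
    nlinarith [sq_nonneg κ]

theorem shk_between_diracs_general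
    {n : ℕ} (κ : ℝ)
    (x0 x1 : Eucl n) (hd : dist x0 x1 < κ * Real.pi / 2) :
    SHK κ (Measure.dirac x0) (Measure.dirac x1) = dist x0 x1 := by
  have hκ := pos_of_dist_lt_mul_pi_div_two hd
  have hθ : 0 ≤ dist x0 x1 / κ := div_nonneg dist_nonneg hκ.le
  have hθ' : dist x0 x1 / κ ≤ Real.pi := by
    rw [div_le_iff₀ hκ]
    nlinarith [Real.pi_pos]
  have hcos : 1 - 2 * κ ^ 2 * (1 - Real.cos (dist x0 x1 / κ)) / (2 * κ ^ 2)
      = Real.cos (dist x0 x1 / κ) := by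
    field_simp
    ring
  have hHK : 0 ≤ 2 * κ ^ 2 * (1 - Real.cos (dist x0 x1 / κ)) := by
    nlinarith [Real.cos_le_one (dist x0 x1 / κ)]
  rw [SHK, HK2_dirac_dirac hd, ENNReal.toReal_ofReal hHK, hcos,
    Real.arccos_cos hθ hθ', mul_div_cancel₀ _ hκ.ne']

/-- the SHK distance between Dirac measures equals the Euclidean distance. -/
theorem shk_between_diracs
    {n : ℕ} (hn : 1 ≤ n) (κ : ℝ) (hκ : 0 < κ)
    (x0 x1 : Eucl n) (hd : dist x0 x1 < κ * Real.pi / 2) :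
    SHK κ (Measure.dirac x0) (Measure.dirac x1) = dist x0 x1 :=
  shk_between_diracs_general κ x0 x1 hd
end
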